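/- arXiv:1912.02643 — 5 statements merged into one kernel-verified Lean document; each statement's English description precedes it below -/
import Mathlib

section
/- Let n, k ≥ 1, let A be an n×n complex matrix satisfying Re(x*Ax) ≥ 0 for all x ∈ ℂⁿ, and let γ > 0. Then the matrix I + γA is invertible; moreover, for every n×k matrix V with orthonormal columns (V*V = I_k), the compressed matrix H̃ := V*(I + γA)⁻¹V is invertible, and, setting H := (1/γ)(H̃⁻¹ − I_k), there exists a constant ω_k ≥ 0 such that ‖exp(−tH)‖ ≤ e^{−t·ω_k} for all t ≥ 0. -/
open Matrix
open scoped Matrix.Norms.L2Operator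

set_option maxHeartbeats 1000000
set_option synthInstance.maxHeartbeats 1000000

open NormedSpace in
theorem sai_aux_contraction {E : Type*} [NormedAddCommGroup E] [InnerProductSpace ℂ E]
    [CompleteSpace E]
    (S : E →L[ℂ] E) (hS : ∀ x : E, 0 ≤ (inner ℂ x (S x) : ℂ).re)
    (t : ℝ) (ht : 0 ≤ t) : ‖exp ((-t) • S)‖ ≤ 1 := by
  apply ContinuousLinearMap.opNorm_le_bound _ zero_le_one
  intro x
  rw [one_mul]
  set B : E →L[ℂ] E := -S with hB
  set f : ℝ → E := fun s => exp (s • B) x with hfdef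
  have hf : ∀ s, HasDerivAt f (B (f s)) s := by
    intro s
    have h1 : HasDerivAt (fun u : ℝ => exp (u • B)) (B * exp (s • B)) s :=
      hasDerivAt_exp_smul_const' B s
    have h2 := ((ContinuousLinearMap.apply ℂ E x).restrictScalars ℝ).hasFDerivAt.comp_hasDerivAt s h1
    simpa [hfdef, Function.comp_def] using h2
  set g : ℝ → ℝ := fun s => ((inner ℂ (f s) (f s) : ℂ)).re with hgdef
  have hg : ∀ s, HasDerivAt g ((inner ℂ (f s) (B (f s)) : ℂ) + inner ℂ (B (f s)) (f s)).re s := by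
    intro s
    have h3 : HasDerivAt (fun s => (inner ℂ (f s) (f s) : ℂ))
        ((inner ℂ (f s) (B (f s)) : ℂ) + inner ℂ (B (f s)) (f s)) s :=
      (hf s).inner ℂ (hf s)
    have h4 := (Complex.reCLM.hasFDerivAt.comp_hasDerivAt s h3)
    simpa [hgdef, Function.comp_def] using h4
  have hle : ∀ s, ((inner ℂ (f s) (B (f s)) : ℂ) + inner ℂ (B (f s)) (f s)).re ≤ 0 := by
    intro s
    have : ((inner ℂ (B (f s)) (f s) : ℂ)).re = ((inner ℂ (f s) (B (f s)) : ℂ)).re := by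
      simpa [RCLike.re_to_complex] using inner_re_symm (𝕜 := ℂ) (B (f s)) (f s)
    have h5 := hS (f s)
    simp only [Complex.add_re, this, hB, ContinuousLinearMap.neg_apply, inner_neg_right,
      inner_neg_left, Complex.neg_re]
    have this2 : ((inner ℂ (S (f s)) (f s) : ℂ)).re = ((inner ℂ (f s) (S (f s)) : ℂ)).re := by
      simpa [RCLike.re_to_complex] using inner_re_symm (𝕜 := ℂ) (S (f s)) (f s)
    linarith
  have hanti : Antitone g :=
    antitone_of_deriv_nonpos (fun s => (hg s).differentiableAt)
      (fun s => by rw [(hg s).deriv]; exact hle s)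
  have h0 : g t ≤ g 0 := hanti ht
  have hg0 : g 0 = ‖x‖ ^ 2 := by
    have := inner_self_eq_norm_sq (𝕜 := ℂ) x
    simp only [RCLike.re_to_complex] at this
    simp [hgdef, hfdef, exp_zero, this]
    rw [← Complex.ofReal_pow, Complex.ofReal_re]
  have hgt : g t = ‖f t‖ ^ 2 := by
    have := inner_self_eq_norm_sq (𝕜 := ℂ) (f t)
    rw [hgdef]
    simpa [RCLike.re_to_complex] using this
  have : ‖f t‖ ≤ ‖x‖ := by
    rw [hg0, hgt] at h0
    nlinarith [norm_nonneg (f t), norm_nonneg x]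
  have hfin : exp ((-t) • S) x = f t := by
    rw [hfdef]
    simp only [hB, smul_neg, neg_smul]
  rw [hfin]
  exact this

section DotLemmas
variable {m l : ℕ}

/-- dot product vs Euclidean inner product -/
lemma sai_dot_eq_inner (x y : Fin m → ℂ) :
    star x ⬝ᵥ y =
      inner ℂ ((WithLp.equiv 2 (Fin m → ℂ)).symm x : EuclideanSpace ℂ (Fin m))
        ((WithLp.equiv 2 (Fin m → ℂ)).symm y) := by
  simp [dotProduct, PiLp.inner_apply, RCLike.inner_apply, mul_comm]

lemma sai_re2_nonneg (x : Fin m → ℂ) : 0 ≤ (star x ⬝ᵥ x).re := by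
  have h := sai_dot_eq_inner x x
  have h2 := inner_self_eq_norm_sq (𝕜 := ℂ) ((WithLp.equiv 2 (Fin m → ℂ)).symm x)
  simp only [RCLike.re_to_complex] at h2
  rw [h, h2]
  positivity

lemma sai_re2_eq_zero {x : Fin m → ℂ} (h : (star x ⬝ᵥ x).re = 0) : x = 0 := by
  have hd := sai_dot_eq_inner x x
  have h2 := inner_self_eq_norm_sq (𝕜 := ℂ) ((WithLp.equiv 2 (Fin m → ℂ)).symm x)
  simp only [RCLike.re_to_complex] at h2
  rw [hd, h2] at h
  have : ((WithLp.equiv 2 (Fin m → ℂ)).symm x : EuclideanSpace ℂ (Fin m)) = 0 := by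
    have hn := pow_eq_zero_iff (n := 2) (by norm_num) |>.mp h
    exact norm_eq_zero.mp hn
  simpa using congrArg (WithLp.equiv 2 (Fin m → ℂ)) this

/-- adjoint move -/
lemma sai_dot_adjoint (N : Matrix (Fin m) (Fin l) ℂ) (v : Fin l → ℂ) (w : Fin m → ℂ) :
    star (N *ᵥ v) ⬝ᵥ w = star v ⬝ᵥ (Nᴴ *ᵥ w) := by
  rw [star_mulVec, ← Matrix.dotProduct_mulVec]

lemma sai_re_dot_comm (v w : Fin m → ℂ) : (star v ⬝ᵥ w).re = (star w ⬝ᵥ v).re := by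
  rw [Matrix.star_dotProduct]
  simp

/-- real part of the quadratic form is insensitive to conjugate transpose -/
lemma sai_re_dot_conjTranspose (N : Matrix (Fin m) (Fin m) ℂ) (x : Fin m → ℂ) :
    (star x ⬝ᵥ (Nᴴ *ᵥ x)).re = (star x ⬝ᵥ (N *ᵥ x)).re := by
  rw [← sai_dot_adjoint, sai_re_dot_comm]

/-- contraction property of `Vᴴ` for orthonormal `V` -/
lemma sai_proj_contract (V : Matrix (Fin m) (Fin l) ℂ) (hV : Vᴴ * V = 1) (u : Fin m → ℂ) :
    (star (Vᴴ *ᵥ u) ⬝ᵥ (Vᴴ *ᵥ u)).re ≤ (star u ⬝ᵥ u).re := by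
  set s : Fin l → ℂ := Vᴴ *ᵥ u with hs
  have key1 : star s ⬝ᵥ s = star u ⬝ᵥ (V *ᵥ s) := by
    rw [hs, sai_dot_adjoint, conjTranspose_conjTranspose]
  have key2 : (star (V *ᵥ s) ⬝ᵥ (V *ᵥ s)) = star s ⬝ᵥ s := by
    rw [sai_dot_adjoint, mulVec_mulVec, hV, one_mulVec]
  -- move to Euclidean space
  set uE : EuclideanSpace ℂ (Fin m) := (WithLp.equiv 2 (Fin m → ℂ)).symm u with huE
  set vE : EuclideanSpace ℂ (Fin m) := (WithLp.equiv 2 (Fin m → ℂ)).symm (V *ᵥ s) with hvE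
  set sE : EuclideanSpace ℂ (Fin l) := (WithLp.equiv 2 (Fin l → ℂ)).symm s with hsE
  have hnorm_s : (star s ⬝ᵥ s).re = ‖sE‖ ^ 2 := by
    have h2 := inner_self_eq_norm_sq (𝕜 := ℂ) sE
    simp only [RCLike.re_to_complex] at h2
    rw [sai_dot_eq_inner, ← hsE, h2]
  have hnorm_u : (star u ⬝ᵥ u).re = ‖uE‖ ^ 2 := by
    have h2 := inner_self_eq_norm_sq (𝕜 := ℂ) uE
    simp only [RCLike.re_to_complex] at h2
    rw [sai_dot_eq_inner, ← huE, h2]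
  have hnorm_v : ‖vE‖ ^ 2 = ‖sE‖ ^ 2 := by
    have h2 := inner_self_eq_norm_sq (𝕜 := ℂ) vE
    simp only [RCLike.re_to_complex] at h2
    rw [← h2, hvE, ← sai_dot_eq_inner, key2, hnorm_s]
  have hCS : (star u ⬝ᵥ (V *ᵥ s)).re ≤ ‖uE‖ * ‖vE‖ := by
    rw [sai_dot_eq_inner, ← huE, ← hvE]
    calc (inner ℂ uE vE : ℂ).re ≤ ‖(inner ℂ uE vE : ℂ)‖ := Complex.re_le_norm _
      _ ≤ ‖uE‖ * ‖vE‖ := norm_inner_le_norm _ _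
  have hsv : ‖vE‖ = ‖sE‖ := by
    nlinarith [norm_nonneg vE, norm_nonneg sE]
  have hmain : ‖sE‖ ^ 2 ≤ ‖uE‖ * ‖sE‖ := by
    calc ‖sE‖ ^ 2 = (star s ⬝ᵥ s).re := hnorm_s.symm
      _ = (star u ⬝ᵥ (V *ᵥ s)).re := by rw [key1]
      _ ≤ ‖uE‖ * ‖vE‖ := hCS
      _ = ‖uE‖ * ‖sE‖ := by rw [hsv]
  have hfin : ‖sE‖ ≤ ‖uE‖ := by
    rcases eq_or_lt_of_le (norm_nonneg sE) with h | h
    · rw [← h]; exact norm_nonneg uE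
    · nlinarith
  rw [hnorm_s, hnorm_u]
  nlinarith [norm_nonneg sE, norm_nonneg uE]

end DotLemmas

/-- **Lemma 1 (stability of the projected SAI matrix).**
If `A` satisfies `Re (x*Ax) ≥ 0` for all `x ∈ ℂⁿ` and `γ > 0`, then `I + γA` is
invertible, and for every `n×k` matrix `V` with orthonormal columns the compressed
matrix `H̃ = V*(I+γA)⁻¹V` is invertible and `H = (1/γ)(H̃⁻¹ - I)` satisfies
`‖exp (-tH)‖ ≤ exp (-t ω)` for some `ω ≥ 0` and all `t ≥ 0`. -/
theorem sai_projected_matrix_stability (n k : ℕ) (hn : 1 ≤ n) (hk : 1 ≤ k)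
    (A : Matrix (Fin n) (Fin n) ℂ)
    (hA : ∀ x : Fin n → ℂ, 0 ≤ (star x ⬝ᵥ A.mulVec x).re)
    (γ : ℝ) (hγ : 0 < γ) :
    IsUnit (1 + (γ : ℂ) • A) ∧
    ∀ V : Matrix (Fin n) (Fin k) ℂ, Vᴴ * V = 1 →
      IsUnit (Vᴴ * (1 + (γ : ℂ) • A)⁻¹ * V) ∧
      ∃ ω : ℝ, 0 ≤ ω ∧ ∀ t : ℝ, 0 ≤ t →
        ‖NormedSpace.exp ((-t : ℂ) •
            ((γ : ℂ)⁻¹ • ((Vᴴ * (1 + (γ : ℂ) • A)⁻¹ * V)⁻¹ - 1)))‖ ≤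
          Real.exp (-t * ω) := by
  set M : Matrix (Fin n) (Fin n) ℂ := 1 + (γ : ℂ) • A with hM
  have ha : ∀ x : Fin n → ℂ, (star x ⬝ᵥ x).re ≤ (star x ⬝ᵥ (M *ᵥ x)).re := by
    intro x
    have hexp : M *ᵥ x = x + (γ : ℂ) • (A *ᵥ x) := by
      rw [hM, add_mulVec, one_mulVec, smul_mulVec]
    rw [hexp, dotProduct_add, dotProduct_smul]
    have hre : ((γ:ℂ) • (star x ⬝ᵥ (A *ᵥ x))).re = γ * (star x ⬝ᵥ (A *ᵥ x)).re := by
      rw [smul_eq_mul, Complex.re_ofReal_mul]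
    simp only [Complex.add_re, hre]
    nlinarith [hA x, hγ.le]
  have hMinj : Function.Injective (M.mulVec) := by
    intro x y hxy
    have h0 : M *ᵥ (x - y) = 0 := by rw [mulVec_sub, hxy, sub_self]
    have h1 : (star (x-y) ⬝ᵥ (x-y)).re ≤ 0 := by
      have := ha (x - y); rw [h0] at this; simpa using this
    have h2 := sai_re2_nonneg (x - y)
    exact sub_eq_zero.mp (sai_re2_eq_zero (le_antisymm h1 h2))
  have hMunit : IsUnit M := mulVec_injective_iff_isUnit.mp hMinj
  have hMdet : IsUnit M.det := (isUnit_iff_isUnit_det M).mp hMunit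
  have hMB : M * M⁻¹ = 1 := mul_nonsing_inv M hMdet
  have hc : ∀ u : Fin n → ℂ,
      (star (M⁻¹ *ᵥ u) ⬝ᵥ (M⁻¹ *ᵥ u)).re ≤ (star u ⬝ᵥ (M⁻¹ *ᵥ u)).re := by
    intro u
    set x := M⁻¹ *ᵥ u with hx
    have hu : M *ᵥ x = u := by rw [hx, mulVec_mulVec, hMB, one_mulVec]
    calc (star x ⬝ᵥ x).re ≤ (star x ⬝ᵥ (M *ᵥ x)).re := ha x
      _ = (star x ⬝ᵥ (Mᴴ *ᵥ x)).re := (sai_re_dot_conjTranspose M x).symm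
      _ = (star (M *ᵥ x) ⬝ᵥ x).re := by rw [sai_dot_adjoint M x x]
      _ = (star u ⬝ᵥ x).re := by rw [hu]
  refine ⟨hMunit, ?_⟩
  intro V hV
  set Ht : Matrix (Fin k) (Fin k) ℂ := Vᴴ * M⁻¹ * V with hHt
  have hHtmul : ∀ z, Ht *ᵥ z = Vᴴ *ᵥ (M⁻¹ *ᵥ (V *ᵥ z)) := by
    intro z; rw [hHt, ← mulVec_mulVec, ← mulVec_mulVec]
  have hd : ∀ z, star z ⬝ᵥ (Ht *ᵥ z) = star (V *ᵥ z) ⬝ᵥ (M⁻¹ *ᵥ (V *ᵥ z)) := by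
    intro z
    rw [hHtmul, ← sai_dot_adjoint]
  have hVcancel : ∀ w : Fin k → ℂ, V *ᵥ w = 0 → w = 0 := by
    intro w hw
    have : (Vᴴ * V) *ᵥ w = Vᴴ *ᵥ (V *ᵥ w) := (mulVec_mulVec w Vᴴ V).symm
    rw [hV, one_mulVec, hw, mulVec_zero] at this
    exact this
  have hHtinj : Function.Injective Ht.mulVec := by
    intro z y hzy
    have h0 : Ht *ᵥ (z - y) = 0 := by rw [mulVec_sub, hzy, sub_self]
    set w := z - y with hwdef
    have h1 : (star w ⬝ᵥ (Ht *ᵥ w)).re = 0 := by rw [h0]; simp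
    have h2 : (star (V *ᵥ w) ⬝ᵥ (M⁻¹ *ᵥ (V *ᵥ w))).re = 0 := by
      rw [← hd w]; exact h1
    have h3 := hc (V *ᵥ w)
    have h4 := sai_re2_nonneg (M⁻¹ *ᵥ (V *ᵥ w))
    have h5 : M⁻¹ *ᵥ (V *ᵥ w) = 0 := sai_re2_eq_zero (by linarith)
    have h6 : V *ᵥ w = 0 := by
      have : M *ᵥ (M⁻¹ *ᵥ (V *ᵥ w)) = V *ᵥ w := by
        rw [mulVec_mulVec, hMB, one_mulVec]
      rw [h5, mulVec_zero] at this
      exact this.symm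
    exact sub_eq_zero.mp (hVcancel w h6)
  have hHtunit : IsUnit Ht := mulVec_injective_iff_isUnit.mp hHtinj
  have hHtdet : IsUnit Ht.det := (isUnit_iff_isUnit_det Ht).mp hHtunit
  have hHtB : Ht * Ht⁻¹ = 1 := mul_nonsing_inv Ht hHtdet
  refine ⟨hHtunit, 0, le_refl 0, ?_⟩
  intro t ht
  set Hm : Matrix (Fin k) (Fin k) ℂ := (γ:ℂ)⁻¹ • (Ht⁻¹ - 1) with hHm
  -- accretivity of Hm
  have hf : ∀ z : Fin k → ℂ, 0 ≤ (star z ⬝ᵥ (Hm *ᵥ z)).re := by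
    intro z
    set w := Ht⁻¹ *ᵥ z with hw
    have hzw : Ht *ᵥ w = z := by rw [hw, mulVec_mulVec, hHtB, one_mulVec]
    have e1 : (star z ⬝ᵥ w).re = (star w ⬝ᵥ (Ht *ᵥ w)).re := by
      conv_lhs => rw [← hzw]
      rw [sai_dot_adjoint, sai_re_dot_conjTranspose]
    have e2 : (star w ⬝ᵥ (Ht *ᵥ w)).re = (star (V *ᵥ w) ⬝ᵥ (M⁻¹ *ᵥ (V *ᵥ w))).re :=
      congrArg Complex.re (hd w)
    have e3 := sai_proj_contract V hV (M⁻¹ *ᵥ (V *ᵥ w))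
    have e4 : star z ⬝ᵥ z = star (Vᴴ *ᵥ (M⁻¹ *ᵥ (V *ᵥ w))) ⬝ᵥ (Vᴴ *ᵥ (M⁻¹ *ᵥ (V *ᵥ w))) := by
      rw [← hHtmul w, hzw]
    have e5 := hc (V *ᵥ w)
    have key : (star z ⬝ᵥ z).re ≤ (star z ⬝ᵥ w).re := by
      rw [e1, e2, e4]
      linarith
    have hmv : Hm *ᵥ z = (γ:ℂ)⁻¹ • (w - z) := by
      rw [hHm, smul_mulVec, sub_mulVec, one_mulVec, hw]
    rw [hmv, dotProduct_smul]
    have hcast : ((γ:ℂ))⁻¹ = ((γ⁻¹ : ℝ) : ℂ) := by push_cast; ring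
    rw [hcast, smul_eq_mul, Complex.re_ofReal_mul]
    have hsub : 0 ≤ (star z ⬝ᵥ (w - z)).re := by
      rw [dotProduct_sub]
      simp only [Complex.sub_re]
      linarith
    exact mul_nonneg (inv_nonneg.mpr hγ.le) hsub
  -- transfer to Euclidean space
  set φ := Matrix.toEuclideanCLM (𝕜 := ℂ) (n := Fin k) with hφ
  have hφc : Continuous φ := (AddMonoidHomClass.isometry_of_norm φ (fun X => rfl)).continuous
  have hS : ∀ xE : EuclideanSpace ℂ (Fin k), 0 ≤ (inner ℂ xE (φ Hm xE) : ℂ).re := by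
    intro xE
    have hx : xE = (WithLp.equiv 2 (Fin k → ℂ)).symm (WithLp.equiv 2 (Fin k → ℂ) xE) := rfl
    rw [hx, hφ, Matrix.toEuclideanCLM_toLp, ← WithLp.equiv_symm_apply, ← sai_dot_eq_inner]
    exact hf _
  have h1 : φ (NormedSpace.exp ((-t:ℂ) • Hm)) = NormedSpace.exp ((-t:ℂ) • φ Hm) := by
    rw [NormedSpace.map_exp_of_mem_ball (𝕂 := ℂ) φ hφc _
      ((NormedSpace.expSeries_radius_eq_top ℂ (Matrix (Fin k) (Fin k) ℂ)).symm ▸ edist_lt_top _ _), _root_.map_smul]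
  have smuleq : ((-t:ℂ)) • (φ Hm) = (-t : ℝ) • (φ Hm) := by
    rw [← smul_one_smul ℂ (-t : ℝ) (φ Hm), Complex.real_smul, mul_one, Complex.ofReal_neg]
  have expeq : NormedSpace.exp ((-t:ℝ) • φ Hm) = NormedSpace.exp ((-t:ℝ) • φ Hm) := by
    rfl
  have hbound : ‖NormedSpace.exp ((-t:ℂ) • Hm)‖ ≤ 1 := by
    rw [Matrix.cstar_norm_def, h1, smuleq, expeq]
    exact sai_aux_contraction (φ Hm) hS t ht
  calc ‖NormedSpace.exp ((-t:ℂ) • Hm)‖ ≤ 1 := hbound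
    _ = Real.exp (-t * 0) := by rw [mul_zero, Real.exp_zero]
end

section
/- Let A be an n×n complex matrix, γ > 0 such that I + γA is invertible, V_k an n×k complex matrix, v_{k+1} ∈ ℂⁿ, H̃ an invertible k×k complex matrix and h̃ a scalar such that (I + γA)⁻¹V_k = V_k·H̃ + h̃·v_{k+1}·e_kᵀ. Set H := (1/γ)(H̃⁻¹ − I_k), let β > 0, u(t) := β·exp(−tH)e₁, y_k(t) := V_k·u(t), and define the residual r_k(t) := −A·y_k(t) − y_k′(t) (y_k is differentiable with y_k′(t) = −V_k·H·u(t)). Then for all t: r_k(t) = β_k(t)·(I + γA)v_{k+1}, where β_k(t) := (h̃/γ)·e_kᵀ(I + γH)u(t) = (h̃/γ)·e_kᵀ H̃⁻¹ u(t); in particular ‖r_k(t)‖ = |β_k(t)|·‖(I + γA)v_{k+1}‖. -/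
open Matrix
open scoped Matrix.Norms.L2Operator

lemma mul_one_by_one {m : ℕ} (M : Matrix (Fin m) (Fin 1) ℂ) (s : Matrix (Fin 1) (Fin 1) ℂ) :
    M * s = s 0 0 • M := by
  ext i j
  fin_cases j
  simp [Matrix.mul_apply, Fin.sum_univ_one]
  exact mul_comm _ _

/-- SAI residual formula (first assertion of Proposition 1): if
`(I+γA)⁻¹ Vk = Vk H̃ + h̃ v_{k+1} e_kᵀ`, `H = (1/γ)(H̃⁻¹ - I)`,
`u t = β exp(-tH) e₁`, `y t = Vk (u t)`, `y' t = -Vk H (u t)` and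
`r t = -A (y t) - y' t`, then `r t = β_k(t) (I+γA) v_{k+1}` with
`β_k(t) = (h̃/γ) e_kᵀ (I+γH) u(t) = (h̃/γ) e_kᵀ H̃⁻¹ u(t)`, and
`‖r t‖ = |β_k(t)| ‖(I+γA) v_{k+1}‖`. -/
theorem sai_residual_formula (n k : ℕ) (hk : 1 ≤ k)
    (A : Matrix (Fin n) (Fin n) ℂ)
    (γ : ℝ) (hγ : 0 < γ) (hinv : IsUnit (1 + (γ : ℂ) • A))
    (Vk : Matrix (Fin n) (Fin k) ℂ) (vk1 : Matrix (Fin n) (Fin 1) ℂ)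
    (Ht : Matrix (Fin k) (Fin k) ℂ) (hHt : IsUnit Ht) (ht : ℂ)
    (harn : (1 + (γ : ℂ) • A)⁻¹ * Vk = Vk * Ht +
      ht • (vk1 * Matrix.single (0 : Fin 1) (⟨k - 1, by omega⟩ : Fin k) (1 : ℂ)))
    (H : Matrix (Fin k) (Fin k) ℂ) (hH : H = (γ : ℂ)⁻¹ • (Ht⁻¹ - 1))
    (β : ℝ) (hβ : 0 < β)
    (u : ℝ → Matrix (Fin k) (Fin 1) ℂ)
    (hu : ∀ t : ℝ, u t = (β : ℂ) • (NormedSpace.exp ((-t : ℂ) • H) *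
      Matrix.single (⟨0, by omega⟩ : Fin k) (0 : Fin 1) (1 : ℂ)))
    (y yd r : ℝ → Matrix (Fin n) (Fin 1) ℂ)
    (hy : ∀ t : ℝ, y t = Vk * u t)
    (hyd : ∀ t : ℝ, yd t = -(Vk * (H * u t)))
    (hr : ∀ t : ℝ, r t = -(A * y t) - yd t)
    (βk : ℝ → ℂ)
    (hβk : ∀ t : ℝ, βk t = ht / (γ : ℂ) *
      ((Matrix.single (0 : Fin 1) (⟨k - 1, by omega⟩ : Fin k) (1 : ℂ) *
        ((1 + (γ : ℂ) • H) * u t) : Matrix (Fin 1) (Fin 1) ℂ) 0 0)) :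
    ∀ t : ℝ,
      r t = βk t • ((1 + (γ : ℂ) • A) * vk1) ∧
      βk t = ht / (γ : ℂ) *
        ((Matrix.single (0 : Fin 1) (⟨k - 1, by omega⟩ : Fin k) (1 : ℂ) *
          (Ht⁻¹ * u t) : Matrix (Fin 1) (Fin 1) ℂ) 0 0) ∧
      ‖r t‖ = ‖βk t‖ * ‖(1 + (γ : ℂ) • A) * vk1‖ := by
  intro t
  set E : Matrix (Fin 1) (Fin k) ℂ :=
    Matrix.single (0 : Fin 1) (⟨k - 1, by omega⟩ : Fin k) (1 : ℂ) with hE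
  set B : Matrix (Fin n) (Fin n) ℂ := 1 + (γ : ℂ) • A with hBdef
  have hγC : (γ : ℂ) ≠ 0 := by
    exact_mod_cast (Complex.ofReal_ne_zero.mpr hγ.ne')
  have hdet : IsUnit B.det := (Matrix.isUnit_iff_isUnit_det B).mp hinv
  have hdetHt : IsUnit Ht.det := (Matrix.isUnit_iff_isUnit_det Ht).mp hHt
  have hK : 1 + (γ : ℂ) • H = Ht⁻¹ := by
    rw [hH, smul_smul, mul_inv_cancel₀ hγC, one_smul]
    abel
  -- key identity
  have h1 : Vk = B * (Vk * Ht) + ht • (B * (vk1 * E)) := by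
    calc Vk = B * (B⁻¹ * Vk) := by
          rw [← Matrix.mul_assoc, Matrix.mul_nonsing_inv _ hdet, Matrix.one_mul]
      _ = _ := by rw [harn, Matrix.mul_add, Matrix.mul_smul]
  have h2 : B * Vk * Ht = Vk - ht • (B * (vk1 * E)) := by
    rw [Matrix.mul_assoc, eq_sub_iff_add_eq]
    exact h1.symm
  have key : B * Vk = Vk * Ht⁻¹ - ht • (B * (vk1 * (E * Ht⁻¹))) := by
    calc B * Vk = B * Vk * Ht * Ht⁻¹ := by
          rw [Matrix.mul_assoc, Matrix.mul_nonsing_inv _ hdetHt, Matrix.mul_one]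
      _ = (Vk - ht • (B * (vk1 * E))) * Ht⁻¹ := by rw [h2]
      _ = Vk * Ht⁻¹ - ht • (B * (vk1 * (E * Ht⁻¹))) := by
          simp only [Matrix.sub_mul, Matrix.smul_mul, Matrix.mul_assoc]
  -- apply to u t
  have key2 : B * (Vk * u t) = Vk * (Ht⁻¹ * u t)
      - ht • (B * (vk1 * (E * (Ht⁻¹ * u t)))) := by
    calc B * (Vk * u t) = (B * Vk) * u t := by rw [Matrix.mul_assoc]
      _ = (Vk * Ht⁻¹ - ht • (B * (vk1 * (E * Ht⁻¹)))) * u t := by rw [key]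
      _ = _ := by simp only [Matrix.sub_mul, Matrix.smul_mul, Matrix.mul_assoc]
  -- expand both sides
  have expand : Vk * (u t) + (γ : ℂ) • (A * (Vk * u t)) =
      Vk * (u t) + (γ : ℂ) • (Vk * (H * u t))
      - ht • (B * (vk1 * (E * (Ht⁻¹ * u t)))) := by
    have l : B * (Vk * u t) = Vk * (u t) + (γ : ℂ) • (A * (Vk * u t)) := by
      rw [hBdef, Matrix.add_mul, Matrix.one_mul, Matrix.smul_mul]
    have rr : Vk * (Ht⁻¹ * u t) = Vk * (u t) + (γ : ℂ) • (Vk * (H * u t)) := by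
      rw [← hK, Matrix.add_mul, Matrix.one_mul, Matrix.smul_mul, Matrix.mul_add,
        Matrix.mul_smul]
    rw [← l, ← rr]
    exact key2
  have expand2 : (γ : ℂ) • (Vk * (H * u t) - A * (Vk * u t)) =
      ht • (B * (vk1 * (E * (Ht⁻¹ * u t)))) := by
    rw [smul_sub]
    have hc : ht • (B * (vk1 * (E * (Ht⁻¹ * u t)))) =
        (Vk * (u t) + (γ : ℂ) • (Vk * (H * u t)))
        - (Vk * (u t) + (γ : ℂ) • (A * (Vk * u t))) := by
      rw [expand]; abel
    rw [hc]; abel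
  have hres : Vk * (H * u t) - A * (Vk * u t) =
      ((γ : ℂ)⁻¹ * ht) • (B * (vk1 * (E * (Ht⁻¹ * u t)))) := by
    have h := congrArg (fun M => (γ : ℂ)⁻¹ • M) expand2
    simp only [smul_smul, inv_mul_cancel₀ hγC, one_smul] at h
    exact h
  -- second assertion
  have hβk2 : βk t = ht / (γ : ℂ) * ((E * (Ht⁻¹ * u t)) 0 0) := by
    rw [hβk, hK]
  have hmain : r t = βk t • (B * vk1) := by
    rw [hr, hyd, hy]
    have hs : -(A * (Vk * u t)) - -(Vk * (H * u t)) = Vk * (H * u t) - A * (Vk * u t) := by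
      abel
    rw [hs, hres, mul_one_by_one, Matrix.mul_smul, smul_smul, hβk2]
    congr 1
    ring
  exact ⟨hmain, hβk2, by rw [hmain, norm_smul]⟩
end

section
/- Let H be a k×k complex matrix and ω ≥ 0 a constant such that Re(x*Hx) ≥ ω‖x‖² for all x ∈ ℂᵏ. Then for every real γ ≥ 0, every t ≥ 0 and every u₀ ∈ ℂᵏ: ‖(I + γH)(exp(−tH) − I)u₀‖ ≤ t·‖(I + γH)H‖·φ(−tω)·‖u₀‖. -/
open Matrix
open scoped Matrix.Norms.L2Operator

/-- `φ(z) = (e^z - 1)/z` (with `φ(0) = 1`). -/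
noncomputable def phi (z : ℝ) : ℝ := if z = 0 then 1 else (Real.exp z - 1) / z

open NormedSpace


lemma hexp_deriv {k : ℕ} (H : Matrix (Fin k) (Fin k) ℂ) (s : ℝ) :
    HasDerivAt (fun s : ℝ => exp ((-(s:ℝ) : ℂ) • H))
      (-(H * exp ((-(s:ℝ) : ℂ) • H))) s := by
  have h1 : HasDerivAt (fun s : ℝ => ((-(s:ℝ) : ℂ))) (-1 : ℂ) s := by
    exact (Complex.ofRealCLM.hasDerivAt (x := s)).neg.congr_deriv (by simp)
  have h2 := hasDerivAt_exp_smul_const' (𝕂 := ℂ) H ((-(s:ℝ) : ℂ))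
  simpa [Function.comp_def, neg_smul] using h2.scomp s h1

lemma contraction {k : ℕ} (H : Matrix (Fin k) (Fin k) ℂ) (ω : ℝ)
    (hH : ∀ x : Fin k → ℂ, ω * (star x ⬝ᵥ x).re ≤ (star x ⬝ᵥ H.mulVec x).re)
    (w : Fin k → ℂ) {s : ℝ} (hs : 0 ≤ s) :
    ‖((WithLp.equiv 2 (Fin k → ℂ)).symm ((exp ((-(s:ℝ) : ℂ) • H)).mulVec w) :
        EuclideanSpace ℂ (Fin k))‖ ≤
      Real.exp (-(ω * s)) *
        ‖((WithLp.equiv 2 (Fin k → ℂ)).symm w : EuclideanSpace ℂ (Fin k))‖ := by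
  classical
  -- the vector solution
  set v : ℝ → (Fin k → ℂ) := fun s => (exp ((-(s:ℝ) : ℂ) • H)).mulVec w with hv
  set x : ℝ → EuclideanSpace ℂ (Fin k) :=
    fun s => (WithLp.equiv 2 (Fin k → ℂ)).symm (v s) with hxdef
  -- linear map M ↦ equiv.symm (M.mulVec w) as a CLM
  let L₀ : Matrix (Fin k) (Fin k) ℂ →ₗ[ℂ] EuclideanSpace ℂ (Fin k) :=
    { toFun := fun M => (WithLp.equiv 2 (Fin k → ℂ)).symm (M.mulVec w)
      map_add' := fun A B => by ext i; simp [Matrix.add_mulVec]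
      map_smul' := fun c A => by ext i; simp [Matrix.smul_mulVec] }
  let L : Matrix (Fin k) (Fin k) ℂ →L[ℂ] EuclideanSpace ℂ (Fin k) :=
    LinearMap.toContinuousLinearMap L₀
  have hx : ∀ s : ℝ, HasDerivAt x
      ((WithLp.equiv 2 (Fin k → ℂ)).symm (-(H.mulVec (v s)))) s := by
    intro s
    have := (L.restrictScalars ℝ).hasFDerivAt.comp_hasDerivAt s (hexp_deriv H s)
    have hval : (L.restrictScalars ℝ) (-(H * exp ((-(s:ℝ) : ℂ) • H))) =
        (WithLp.equiv 2 (Fin k → ℂ)).symm (-(H.mulVec (v s))) := by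
      show (WithLp.equiv 2 (Fin k → ℂ)).symm ((-(H * exp ((-(s:ℝ) : ℂ) • H))) *ᵥ w) = _
      rw [Matrix.neg_mulVec, ← Matrix.mulVec_mulVec]
    rw [hval] at this
    exact this
  -- squared norm
  set q : ℝ → ℝ := fun s => (inner (𝕜 := ℂ) (x s) (x s)).re with hq
  have hq' : ∀ s : ℝ, HasDerivAt q (-2 * (star (v s) ⬝ᵥ H.mulVec (v s)).re) s := by
    intro s
    have hinner := (HasDerivAt.inner ℂ (hx s) (hx s))
    have := Complex.reCLM.hasFDerivAt.comp_hasDerivAt s hinner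
    refine this.congr_deriv (Eq.symm ?_)
    have h1 : inner (𝕜 := ℂ) (x s) ((WithLp.equiv 2 (Fin k → ℂ)).symm (-(H.mulVec (v s)))) =
        -(star (v s) ⬝ᵥ H.mulVec (v s)) := by
      rw [hxdef]
      simp only [WithLp.equiv_symm_apply, EuclideanSpace.inner_toLp_toLp]
      rw [dotProduct_comm]
      simp [dotProduct_neg]
    have h2 : inner (𝕜 := ℂ) ((WithLp.equiv 2 (Fin k → ℂ)).symm (-(H.mulVec (v s))) :
        EuclideanSpace ℂ (Fin k)) (x s) = starRingEnd ℂ (-(star (v s) ⬝ᵥ H.mulVec (v s))) := by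
      rw [← h1, ← inner_conj_symm]
    show -2 * (star (v s) ⬝ᵥ H.mulVec (v s)).re = Complex.reCLM _
    rw [Complex.reCLM_apply, Complex.add_re, h1, h2]
    simp [Complex.conj_re]
    ring
  -- q s = ‖x s‖ ^ 2
  have hqnorm : ∀ s, q s = ‖x s‖ ^ 2 := fun s => inner_self_eq_norm_sq (𝕜 := ℂ) (x s)
  have hqv : ∀ s, q s = (star (v s) ⬝ᵥ v s).re := by
    intro s
    rw [hq]
    rw [hxdef]
    simp only [WithLp.equiv_symm_apply, EuclideanSpace.inner_toLp_toLp]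
    exact congrArg Complex.re (dotProduct_comm _ _)
  -- Gronwall function
  set g : ℝ → ℝ := fun s => Real.exp (2 * ω * s) * q s with hg
  have hg' : ∀ s : ℝ, HasDerivAt g
      (Real.exp (2 * ω * s) * (2 * ω * q s + (-2 * (star (v s) ⬝ᵥ H.mulVec (v s)).re))) s := by
    intro s
    have he : HasDerivAt (fun s : ℝ => Real.exp (2 * ω * s)) (2 * ω * Real.exp (2 * ω * s)) s := by
      have := (Real.hasDerivAt_exp (2 * ω * s)).comp s
        (((hasDerivAt_id s).const_mul (2 * ω)))
      simpa [Function.comp_def, mul_comm] using this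
    have := he.mul (hq' s)
    refine this.congr_deriv (Eq.symm ?_)
    ring
  have hgmono : AntitoneOn g (Set.Ici (0:ℝ)) := by
    apply antitoneOn_of_deriv_nonpos (convex_Ici 0)
    · exact Continuous.continuousOn (continuous_iff_continuousAt.2
        (fun s => ((hg' s).differentiableAt).continuousAt))
    · intro s hs
      exact ((hg' s).differentiableAt).differentiableWithinAt
    · intro s hs
      rw [(hg' s).deriv]
      apply mul_nonpos_of_nonneg_of_nonpos (Real.exp_nonneg _)
      have := hH (v s)
      rw [hqv s]
      nlinarith [this]
  have hqnorm' := hqnorm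
  have hg0 : g 0 = ‖x 0‖ ^ 2 := by simp [hg, hqnorm 0]
  have hgs2 : g s = Real.exp (2 * ω * s) * ‖x s‖ ^ 2 := by
    simp only [hg, hqnorm s]
  have hle : Real.exp (2 * ω * s) * ‖x s‖ ^ 2 ≤ ‖x 0‖ ^ 2 := by
    rw [← hgs2, ← hg0]
    exact hgmono Set.self_mem_Ici hs hs
  have hx0 : x 0 = (WithLp.equiv 2 (Fin k → ℂ)).symm w := by
    simp [hxdef, hv]
  have h1 : ‖x s‖ ^ 2 ≤ (Real.exp (-(ω * s)) * ‖x 0‖) ^ 2 := by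
    have e := Real.exp_pos (2 * ω * s)
    have e2 : Real.exp (-(ω * s)) ^ 2 * Real.exp (2 * ω * s) = 1 := by
      rw [sq, ← Real.exp_add, ← Real.exp_add]
      rw [show -(ω * s) + -(ω * s) + 2 * ω * s = 0 by ring]
      exact Real.exp_zero
    nlinarith [norm_nonneg (x 0), norm_nonneg (x s), hle, e, Real.exp_pos (-(ω * s))]
  have := Real.sqrt_le_sqrt h1
  rw [Real.sqrt_sq (norm_nonneg _), Real.sqrt_sq (by positivity)] at this
  rw [hx0] at this
  exact this

lemma normcol {k : ℕ} (v : Matrix (Fin k) (Fin 1) ℂ) :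
    ‖v‖ = ‖((WithLp.equiv 2 (Fin k → ℂ)).symm (fun i => v i 0) : EuclideanSpace ℂ (Fin k))‖ := by
  set c : EuclideanSpace ℂ (Fin k) := (WithLp.equiv 2 (Fin k → ℂ)).symm (fun i => v i 0) with hc
  rw [Matrix.l2_opNorm_def]
  set T := (Matrix.toEuclideanLin.trans LinearMap.toContinuousLinearMap) v with hT
  have key : ∀ x : EuclideanSpace ℂ (Fin 1), T x = x 0 • c := by
    intro x
    ext i
    simp [hT, hc, Matrix.toEuclideanLin_apply, Matrix.mulVec, dotProduct,
      Fin.sum_univ_one, mul_comm]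
  have hx0 : ∀ x : EuclideanSpace ℂ (Fin 1), ‖x‖ = ‖x 0‖ := by
    intro x
    rw [EuclideanSpace.norm_eq]
    simp [Fin.sum_univ_one, Real.sqrt_sq_eq_abs]
  apply le_antisymm
  · apply T.opNorm_le_bound (norm_nonneg c)
    intro x
    rw [key x, norm_smul, ← hx0 x, mul_comm]
  · have e1 : ‖((WithLp.equiv 2 (Fin 1 → ℂ)).symm (fun _ => 1) : EuclideanSpace ℂ (Fin 1))‖ = 1 := by
      rw [hx0]; simp
    calc ‖c‖ = ‖T ((WithLp.equiv 2 (Fin 1 → ℂ)).symm (fun _ => 1))‖ := by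
          rw [key]; simp
      _ ≤ ‖T‖ * 1 := by rw [← e1]; exact T.le_opNorm _
      _ = ‖T‖ := mul_one _

lemma integral_exp_neg_eq (ω t : ℝ) :
    ∫ s in (0:ℝ)..t, Real.exp (-(ω * s)) = t * phi (-t * ω) := by
  by_cases hω0 : ω = 0
  · subst hω0; simp [phi]
  · have hG : ∀ s : ℝ, HasDerivAt (fun s => -(Real.exp (-(ω * s))) / ω)
        (Real.exp (-(ω * s))) s := by
      intro s
      have h1 : HasDerivAt (fun s : ℝ => -(ω * s)) (-ω) s := by
        exact ((hasDerivAt_id s).const_mul ω).neg.congr_deriv (by simp)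
      have h2 := (Real.hasDerivAt_exp (-(ω * s))).comp s h1
      have h3 := (h2.neg).div_const ω
      refine h3.congr_deriv (Eq.symm ?_)
      field_simp
    rw [intervalIntegral.integral_eq_sub_of_hasDerivAt (fun s _ => hG s)
      ((Real.continuous_exp.comp (by continuity)).intervalIntegrable 0 t)]
    by_cases ht0 : t = 0
    · subst ht0; simp
    · rw [phi, if_neg (mul_ne_zero (neg_ne_zero.2 ht0) hω0)]
      field_simp
      ring_nf
      rw [Real.exp_zero]; ring

set_option maxHeartbeats 1000000 in
/-- The small-time estimate (est_ut1). -/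
theorem sai_small_time_estimate (k : ℕ)
    (H : Matrix (Fin k) (Fin k) ℂ) (ω : ℝ) (hω : 0 ≤ ω)
    (hH : ∀ x : Fin k → ℂ, ω * (star x ⬝ᵥ x).re ≤ (star x ⬝ᵥ H.mulVec x).re)
    (γ : ℝ) (hγ : 0 ≤ γ) (t : ℝ) (ht : 0 ≤ t)
    (u0 : Matrix (Fin k) (Fin 1) ℂ) :
    ‖(1 + (γ : ℂ) • H) * ((NormedSpace.exp ((-t : ℂ) • H) - 1) * u0)‖ ≤
      t * ‖(1 + (γ : ℂ) • H) * H‖ * phi (-t * ω) * ‖u0‖ := by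
  classical
  set C : Matrix (Fin k) (Fin k) ℂ := 1 + (γ : ℂ) • H with hC
  set M : ℝ → Matrix (Fin k) (Fin k) ℂ := fun s => exp ((-(s:ℝ) : ℂ) • H) with hM
  -- right-multiplication by u0 as a CLM
  let Ru₀ : Matrix (Fin k) (Fin k) ℂ →ₗ[ℂ] Matrix (Fin k) (Fin 1) ℂ :=
    { toFun := fun X => X * u0
      map_add' := fun A B => Matrix.add_mul A B u0
      map_smul' := fun c A => Matrix.smul_mul c A u0 }
  let Ru : Matrix (Fin k) (Fin k) ℂ →L[ℂ] Matrix (Fin k) (Fin 1) ℂ :=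
    LinearMap.toContinuousLinearMap Ru₀
  set F : ℝ → Matrix (Fin k) (Fin 1) ℂ := fun s => Ru (C * (M s - 1)) with hF
  set D : ℝ → Matrix (Fin k) (Fin 1) ℂ := fun s => Ru (-(C * H) * M s) with hD
  have hFd : ∀ s : ℝ, HasDerivAt F (D s) s := by
    intro s
    have h1 := ((hexp_deriv H s).sub_const (1 : Matrix (Fin k) (Fin k) ℂ)).const_mul C
    have h2 := (Ru.restrictScalars ℝ).hasFDerivAt.comp_hasDerivAt s h1
    have h3 : C * -(H * M s) = -(C * H) * M s := by
      simp [mul_assoc]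
    rw [h3] at h2
    exact h2
  have hMcont : Continuous M := by
    exact continuous_iff_continuousAt.2 fun s => (hexp_deriv H s).continuousAt
  have hDcont : Continuous D := by
    apply Ru.continuous.comp
    exact continuous_const.mul hMcont
  have hFTC := intervalIntegral.integral_eq_sub_of_hasDerivAt
    (f := F) (f' := D) (a := 0) (b := t) (fun s _ => hFd s)
    (hDcont.intervalIntegrable 0 t)
  have hF0 : F 0 = 0 := by
    have : M 0 = 1 := by simp [hM]
    simp [hF, this]
  have hFt : F t = ∫ s in (0:ℝ)..t, D s := by
    rw [hFTC, hF0, sub_zero]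
  -- pointwise bound on ‖D s‖
  have hDbound : ∀ s ∈ Set.Icc (0:ℝ) t, ‖D s‖ ≤ ‖C * H‖ * ‖u0‖ * Real.exp (-(ω * s)) := by
    intro s hs
    have hDs : D s = -((C * H) * (M s * u0)) := by
      show (-(C * H) * M s) * u0 = _
      simp [Matrix.mul_assoc]
    rw [hDs, norm_neg]
    calc ‖(C * H) * (M s * u0)‖ ≤ ‖C * H‖ * ‖M s * u0‖ := Matrix.l2_opNorm_mul _ _
      _ ≤ ‖C * H‖ * (Real.exp (-(ω * s)) * ‖u0‖) := by
          apply mul_le_mul_of_nonneg_left _ (norm_nonneg _)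
          have hcol : (fun i => (M s * u0) i 0) = (M s).mulVec (fun i => u0 i 0) := by
            funext i
            simp [Matrix.mul_apply, Matrix.mulVec, dotProduct]
          rw [normcol (M s * u0), hcol, normcol u0]
          exact contraction H ω hH (fun i => u0 i 0) hs.1
      _ = ‖C * H‖ * ‖u0‖ * Real.exp (-(ω * s)) := by ring
  -- assemble
  have key : ‖F t‖ ≤ t * ‖C * H‖ * phi (-t * ω) * ‖u0‖ := by
    rw [hFt]
    calc ‖∫ s in (0:ℝ)..t, D s‖ ≤ ∫ s in (0:ℝ)..t, ‖D s‖ :=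
          intervalIntegral.norm_integral_le_integral_norm ht
      _ ≤ ∫ s in (0:ℝ)..t, ‖C * H‖ * ‖u0‖ * Real.exp (-(ω * s)) := by
          apply intervalIntegral.integral_mono_on ht
            (hDcont.norm.intervalIntegrable 0 t)
            ((continuous_const.mul (Real.continuous_exp.comp
              ((continuous_const.mul continuous_id).neg))).intervalIntegrable 0 t)
          exact hDbound
      _ = ‖C * H‖ * ‖u0‖ * ∫ s in (0:ℝ)..t, Real.exp (-(ω * s)) := by
          rw [← intervalIntegral.integral_const_mul]
      _ = ‖C * H‖ * ‖u0‖ * (t * phi (-t * ω)) := by rw [integral_exp_neg_eq]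
      _ = t * ‖C * H‖ * phi (-t * ω) * ‖u0‖ := by ring
  have hgoal : (1 + (γ : ℂ) • H) * ((NormedSpace.exp ((-t : ℂ) • H) - 1) * u0) = F t := by
    show C * ((exp ((-t : ℂ) • H) - 1) * u0) = (C * (M t - 1)) * u0
    rw [Matrix.mul_assoc]
  rw [hgoal]
  exact key
end

section
/- Let k ≥ 2, let A be an n×n complex matrix satisfying Re(x*Ax) ≥ 0 for all x ∈ ℂⁿ, and let γ > 0 (so I + γA is invertible). Let V_{k+1} = [V_k, v_{k+1}] be an n×(k+1) matrix with orthonormal columns, let H̃ be an invertible k×k complex matrix and h̃ ≥ 0 a real number such that (I + γA)⁻¹V_k = V_k·H̃ + h̃·v_{k+1}·e_kᵀ. Set H := (1/γ)(H̃⁻¹ − I_k), and assume ω_k ≥ 0 is a constant such that Re(x*Hx) ≥ ω_k‖x‖² for all x ∈ ℂᵏ. Let β > 0, u(t) := β·exp(−tH)e₁, y_k(t) := V_k·u(t), r_k(t) := −A·y_k(t) − y_k′(t), and β_k(t) := (h̃/γ)·e_kᵀ(I + γH)u(t). Then for all t ≥ 0: r_k(t) = β_k(t)·(I + γA)v_{k+1},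 ‖r_k(t)‖ = |β_k(t)|·‖(I + γA)v_{k+1}‖, and |β_k(t)| ≤ β·h̃·( (1/γ)·min{ t·‖(I + γH)H‖·φ(−tω_k), ‖I + γH‖·(1 + e^{−tω_k}) } + |h_{k,1}| ), where h_{k,1} := e_kᵀHe₁. -/
open Matrix
open scoped Matrix.Norms.L2Operator

section Helpers

open NormedSpace

variable {k : ℕ}

lemma entry_abs_le_l2_opNorm {m k : ℕ} (M : Matrix (Fin m) (Fin k) ℂ) (i : Fin m) (j : Fin k) :
    ‖M i j‖ ≤ ‖M‖ := by
  classical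
  set x : EuclideanSpace ℂ (Fin k) := EuclideanSpace.single j 1 with hx
  have h1 : ‖(EuclideanSpace.equiv (Fin m) ℂ).symm (M *ᵥ x)‖ ≤ ‖M‖ * ‖x‖ :=
    M.l2_opNorm_mulVec x
  have hxn : ‖x‖ = 1 := by simp [hx, EuclideanSpace.norm_single]
  set v : EuclideanSpace ℂ (Fin m) := (EuclideanSpace.equiv (Fin m) ℂ).symm (M *ᵥ x) with hv
  have hvi : v i = M i j := by
    show (M *ᵥ (Pi.single j 1)) i = M i j
    simp [Matrix.mulVec_single]
  calc ‖M i j‖ = ‖(starRingEnd ℂ) 1 * v i‖ := by simp [hvi]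
    _ = ‖(inner ℂ (EuclideanSpace.single i (1:ℂ)) v : ℂ)‖ := by
        rw [EuclideanSpace.inner_single_left]
    _ ≤ ‖EuclideanSpace.single i (1:ℂ)‖ * ‖v‖ := norm_inner_le_norm _ _
    _ ≤ ‖M‖ := by
        rw [EuclideanSpace.norm_single]
        simpa [hxn] using h1

lemma hasDerivAt_E (H : Matrix (Fin k) (Fin k) ℂ) (s : ℝ) :
    HasDerivAt (fun s : ℝ => exp ((-s : ℂ) • H))
      (-(H * exp ((-s : ℂ) • H))) s := by
  have h1 : HasDerivAt (fun c : ℂ => exp (c • H)) (H * exp ((-s : ℂ) • H)) (-s : ℂ) :=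
    hasDerivAt_exp_smul_const' H (-s : ℂ)
  have h2 : HasDerivAt (fun s : ℝ => (-s : ℂ)) (-1 : ℂ) s := by
    exact (hasDerivAt_id s).ofReal_comp.neg.congr_deriv (by simp)
  have := HasDerivAt.scomp (𝕜 := ℝ) (𝕜' := ℂ) s h1 h2
  simpa [Function.comp_def] using this

noncomputable def mvCLM (x : EuclideanSpace ℂ (Fin k)) :
    Matrix (Fin k) (Fin k) ℂ →L[ℂ] EuclideanSpace ℂ (Fin k) :=
  LinearMap.toContinuousLinearMap
    { toFun := fun M => (WithLp.equiv 2 _).symm (M *ᵥ (WithLp.equiv 2 _ x))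
      map_add' := by intro M N; ext i; simp [Matrix.add_mulVec]
      map_smul' := by intro c M; ext i; simp [Matrix.smul_mulVec] }

lemma mvCLM_apply (x : EuclideanSpace ℂ (Fin k)) (M : Matrix (Fin k) (Fin k) ℂ) :
    mvCLM x M = (WithLp.equiv 2 _).symm (M *ᵥ (WithLp.equiv 2 _ x)) := rfl

lemma exp_mulVec_norm_le (H : Matrix (Fin k) (Fin k) ℂ) (ω : ℝ)
    (hfov : ∀ x : Fin k → ℂ, ω * (star x ⬝ᵥ x).re ≤ (star x ⬝ᵥ H.mulVec x).re)
    (t : ℝ) (htt : 0 ≤ t) (x : EuclideanSpace ℂ (Fin k)) :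
    ‖mvCLM x (exp ((-t : ℂ) • H))‖ ≤ Real.exp (-t * ω) * ‖x‖ := by
  classical
  set f : ℝ → EuclideanSpace ℂ (Fin k) := fun s => mvCLM x (exp ((-s : ℂ) • H)) with hfdef
  set f' : ℝ → EuclideanSpace ℂ (Fin k) :=
    fun s => -((WithLp.equiv 2 _).symm (H *ᵥ (WithLp.equiv 2 _ (f s)))) with hf'def
  have hf : ∀ s : ℝ, HasDerivAt f (f' s) s := by
    intro s
    have h0 := ((mvCLM x).restrictScalars ℝ).hasFDerivAt.comp_hasDerivAt s (hasDerivAt_E H s)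
    have heq : mvCLM x (-(H * exp ((-s : ℂ) • H))) = f' s := by
      rw [map_neg, mvCLM_apply]
      show _ = -((WithLp.equiv 2 _).symm (H *ᵥ (WithLp.equiv 2 _ (f s))))
      congr 1
      ext i
      simp [hfdef, mvCLM_apply, ← Matrix.mulVec_mulVec]
    simp only [ContinuousLinearMap.coe_restrictScalars', Function.comp_def] at h0
    rwa [heq] at h0
  set P : ℝ → ℝ := fun s => ‖f s‖ ^ 2 with hPdef
  set D : ℝ → ℝ := fun s =>
    ((inner ℂ (f s) (f' s) : ℂ) + (inner ℂ (f' s) (f s) : ℂ)).re with hDdef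
  have hP : ∀ s : ℝ, HasDerivAt P (D s) s := by
    intro s
    have h1 : HasDerivAt (fun s => (inner ℂ (f s) (f s) : ℂ))
        ((inner ℂ (f s) (f' s) : ℂ) + (inner ℂ (f' s) (f s) : ℂ)) s :=
      HasDerivAt.inner ℂ (hf s) (hf s)
    have h2 := Complex.reCLM.hasFDerivAt.comp_hasDerivAt s h1
    simp only [Function.comp_def] at h2
    have h3 : (fun s => Complex.reCLM (inner ℂ (f s) (f s) : ℂ)) = P := by
      funext s
      simpa using inner_self_eq_norm_sq (𝕜 := ℂ) (f s)
    rwa [h3] at h2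
  have hip : ∀ s : ℝ, (inner ℂ (f s) (f' s) : ℂ) =
      -(star (WithLp.equiv 2 _ (f s)) ⬝ᵥ H *ᵥ (WithLp.equiv 2 _ (f s))) := by
    intro s
    rw [EuclideanSpace.inner_eq_star_dotProduct, dotProduct_comm]
    change star (WithLp.equiv 2 (Fin k → ℂ) (f s)) ⬝ᵥ WithLp.equiv 2 (Fin k → ℂ) (f' s) = _
    have h1 : WithLp.equiv 2 (Fin k → ℂ) (f' s) =
        -(H *ᵥ (WithLp.equiv 2 _ (f s))) := by
      rw [hf'def]; simp
    rw [h1, dotProduct_neg]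
  have hfP : ∀ s : ℝ, (star (WithLp.equiv 2 _ (f s)) ⬝ᵥ (WithLp.equiv 2 _ (f s))).re = P s := by
    intro s
    rw [dotProduct_comm]
    change (inner ℂ (f s) (f s)).re = P s
    simpa using inner_self_eq_norm_sq (𝕜 := ℂ) (f s)
  have hDle : ∀ s : ℝ, D s ≤ -(2 * ω) * P s := by
    intro s
    have h2 := hfov (WithLp.equiv 2 _ (f s))
    rw [hfP s] at h2
    have hinner : (inner ℂ (f s) (f' s) : ℂ).re ≤ -(ω * P s) := by
      rw [hip s, Complex.neg_re]; linarith
    have hconj : ((inner ℂ (f' s) (f s) : ℂ)).re = ((inner ℂ (f s) (f' s) : ℂ)).re := by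
      rw [← inner_conj_symm (f s) (f' s), Complex.conj_re]
    rw [hDdef]
    simp only [Complex.add_re, hconj]
    nlinarith [hinner]
  set g : ℝ → ℝ := fun s => Real.exp (2 * ω * s) * P s with hgdef
  have hg : ∀ s : ℝ, HasDerivAt g
      (Real.exp (2 * ω * s) * (2 * ω * 1) * P s + Real.exp (2 * ω * s) * D s) s := by
    intro s
    have h1 : HasDerivAt (fun s : ℝ => Real.exp (2 * ω * s))
        (Real.exp (2 * ω * s) * (2 * ω * 1)) s := ((hasDerivAt_id s).const_mul (2 * ω)).exp
    exact h1.mul (hP s)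
  have hgmono : g t ≤ g 0 := by
    have hcont : Continuous g := by
      have : Differentiable ℝ g := fun s => (hg s).differentiableAt
      exact this.continuous
    have hanti : AntitoneOn g (Set.Icc 0 t) := by
      apply antitoneOn_of_deriv_nonpos (convex_Icc 0 t) hcont.continuousOn
      · intro s _
        exact ((hg s).differentiableAt).differentiableWithinAt
      · intro s _
        rw [(hg s).deriv]
        nlinarith [Real.exp_pos (2 * ω * s), sq_nonneg ‖f s‖, hDle s,
          mul_le_mul_of_nonneg_left (hDle s) (le_of_lt (Real.exp_pos (2 * ω * s)))]
    exact hanti (Set.left_mem_Icc.mpr htt) (Set.right_mem_Icc.mpr htt) htt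
  have hf0 : f 0 = x := by
    rw [hfdef]
    show mvCLM x (exp ((-(0:ℝ) : ℂ) • H)) = x
    have : ((-(0:ℝ) : ℂ)) • H = 0 := by norm_num
    rw [this, exp_zero, mvCLM_apply]
    ext i
    simp [Matrix.one_mulVec]
  have hgm : Real.exp (2 * ω * t) * ‖f t‖ ^ 2 ≤ ‖x‖ ^ 2 := by
    have h0 : g 0 = ‖x‖ ^ 2 := by simp [hgdef, hPdef, hf0]
    have h1 : g t = Real.exp (2 * ω * t) * ‖f t‖ ^ 2 := by simp [hgdef, hPdef]
    rw [← h0, ← h1]; exact hgmono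
  have hsq : ‖f t‖ ^ 2 ≤ (Real.exp (-t * ω) * ‖x‖) ^ 2 := by
    have f1 : Real.exp (-(2 * ω * t)) * Real.exp (2 * ω * t) = 1 := by
      rw [← Real.exp_add]; simp
    have f2 : Real.exp (-t * ω) * Real.exp (-t * ω) = Real.exp (-(2 * ω * t)) := by
      rw [← Real.exp_add]; congr 1; ring
    nlinarith [mul_le_mul_of_nonneg_left hgm (le_of_lt (Real.exp_pos (-(2 * ω * t)))),
      Real.exp_pos (-(2 * ω * t)), norm_nonneg (f t), norm_nonneg x]
  have := Real.sqrt_le_sqrt hsq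
  rwa [Real.sqrt_sq (norm_nonneg _), Real.sqrt_sq (by positivity)] at this

lemma exp_opNorm_le (H : Matrix (Fin k) (Fin k) ℂ) (ω : ℝ)
    (hfov : ∀ x : Fin k → ℂ, ω * (star x ⬝ᵥ x).re ≤ (star x ⬝ᵥ H.mulVec x).re)
    (t : ℝ) (htt : 0 ≤ t) :
    ‖exp ((-t : ℂ) • H)‖ ≤ Real.exp (-t * ω) := by
  rw [Matrix.l2_opNorm_def]
  apply ContinuousLinearMap.opNorm_le_bound _ (Real.exp_nonneg _)
  intro x
  have h := exp_mulVec_norm_le H ω hfov t htt x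
  rw [mvCLM_apply] at h
  exact h

lemma continuous_expE (H : Matrix (Fin k) (Fin k) ℂ) :
    Continuous (fun s : ℝ => exp ((-s : ℂ) • H)) := by
  have : Differentiable ℝ (fun s : ℝ => exp ((-s : ℂ) • H)) :=
    fun s => (hasDerivAt_E H s).differentiableAt
  exact this.continuous

lemma integral_rep (B H : Matrix (Fin k) (Fin k) ℂ) (t : ℝ) :
    B * exp ((-t : ℂ) • H) - B = ∫ s in (0:ℝ)..t, -((B * H) * exp ((-s : ℂ) • H)) := by
  have hG : ∀ s : ℝ, HasDerivAt (fun s : ℝ => B * exp ((-s : ℂ) • H))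
      (-((B * H) * exp ((-s : ℂ) • H))) s := by
    intro s
    have := (hasDerivAt_E H s).const_mul B
    simpa [mul_assoc] using this
  have hcont : Continuous (fun s : ℝ => -((B * H) * exp ((-s : ℂ) • H))) :=
    (continuous_const.mul (continuous_expE H)).neg
  have := intervalIntegral.integral_eq_sub_of_hasDerivAt
    (fun s _ => hG s) (hcont.intervalIntegrable 0 t)
  rw [this]
  have h0 : ((-(0:ℝ) : ℂ)) • H = 0 := by norm_num
  rw [h0, exp_zero, mul_one]

lemma integral_exp_eq_phi (ω t : ℝ) (hω : 0 ≤ ω) (htt : 0 ≤ t) :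
    ∫ s in (0:ℝ)..t, Real.exp (-s * ω) = t * phi (-t * ω) := by
  by_cases hw : ω = 0
  · simp [hw, phi]
  · by_cases ht0 : t = 0
    · simp [ht0, phi]
    · have hG : ∀ s : ℝ, HasDerivAt (fun s : ℝ => -(ω⁻¹) * Real.exp (-s * ω))
          (Real.exp (-s * ω)) s := by
        intro s
        have h1 : HasDerivAt (fun s : ℝ => -s * ω) (-ω) s := by
          simpa using ((hasDerivAt_id s).neg.mul_const ω)
        have := (h1.exp).const_mul (-(ω⁻¹))
        refine this.congr_deriv ?_
        have hwi : ω⁻¹ * ω = 1 := inv_mul_cancel₀ hw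
        linear_combination (Real.exp (-s * ω)) * hwi
      have hcont : Continuous fun s : ℝ => Real.exp (-s * ω) := by continuity
      have := intervalIntegral.integral_eq_sub_of_hasDerivAt
        (fun s _ => hG s) (hcont.intervalIntegrable 0 t)
      rw [this]
      have hz : -t * ω ≠ 0 := by
        intro h
        rcases mul_eq_zero.mp h with h | h
        · exact ht0 (by linarith [neg_eq_zero.mp h])
        · exact hw h
      rw [phi, if_neg hz]
      field_simp
      ring_nf
      rw [Real.exp_zero]
      ring

lemma key_bound (B H : Matrix (Fin k) (Fin k) ℂ) (ω : ℝ) (hω : 0 ≤ ω)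
    (hfov : ∀ x : Fin k → ℂ, ω * (star x ⬝ᵥ x).re ≤ (star x ⬝ᵥ H.mulVec x).re)
    (t : ℝ) (htt : 0 ≤ t) :
    ‖B * exp ((-t : ℂ) • H) - B‖ ≤ ‖B * H‖ * (t * phi (-t * ω)) := by
  rw [integral_rep B H t]
  have h1 : ‖∫ s in (0:ℝ)..t, -((B * H) * exp ((-s : ℂ) • H))‖ ≤
      ∫ s in (0:ℝ)..t, ‖-((B * H) * exp ((-s : ℂ) • H))‖ :=
    intervalIntegral.norm_integral_le_integral_norm htt
  have h2 : (∫ s in (0:ℝ)..t, ‖-((B * H) * exp ((-s : ℂ) • H))‖) ≤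
      ∫ s in (0:ℝ)..t, ‖B * H‖ * Real.exp (-s * ω) := by
    apply intervalIntegral.integral_mono_on htt
    · exact (((continuous_const.mul (continuous_expE H)).neg).norm).intervalIntegrable 0 t
    · exact (continuous_const.mul (by continuity)).intervalIntegrable 0 t
    · intro s hs
      rw [norm_neg]
      calc ‖(B * H) * exp ((-s : ℂ) • H)‖ ≤ ‖B * H‖ * ‖exp ((-s : ℂ) • H)‖ :=
            Matrix.l2_opNorm_mul _ _
        _ ≤ ‖B * H‖ * Real.exp (-s * ω) := by
            apply mul_le_mul_of_nonneg_left _ (norm_nonneg _)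
            exact exp_opNorm_le H ω hfov s hs.1
  have h3 : (∫ s in (0:ℝ)..t, ‖B * H‖ * Real.exp (-s * ω)) =
      ‖B * H‖ * (t * phi (-t * ω)) := by
    rw [intervalIntegral.integral_const_mul, integral_exp_eq_phi ω t hω htt]
  linarith

lemma norm_one_le' (k : ℕ) : ‖(1 : Matrix (Fin k) (Fin k) ℂ)‖ ≤ 1 := by
  rw [Matrix.cstar_norm_def, _root_.map_one]
  exact ContinuousLinearMap.norm_id_le

lemma isUnit_one_add_smul (n : ℕ) (A : Matrix (Fin n) (Fin n) ℂ)
    (hA : ∀ x : Fin n → ℂ, 0 ≤ (star x ⬝ᵥ A.mulVec x).re) (γ : ℝ) (hγ : 0 < γ) :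
    IsUnit (1 + (γ : ℂ) • A) := by
  rw [← Matrix.mulVec_injective_iff_isUnit]
  have hker : ∀ x : Fin n → ℂ, (1 + (γ:ℂ) • A) *ᵥ x = 0 → x = 0 := by
    intro x hx
    have h1 : star x ⬝ᵥ ((1 + (γ:ℂ) • A) *ᵥ x) = 0 := by rw [hx, dotProduct_zero]
    have h2 : star x ⬝ᵥ ((1 + (γ:ℂ) • A) *ᵥ x)
        = star x ⬝ᵥ x + (γ:ℂ) * (star x ⬝ᵥ A *ᵥ x) := by
      rw [Matrix.add_mulVec, dotProduct_add, Matrix.one_mulVec,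
        Matrix.smul_mulVec, dotProduct_smul]
      simp [smul_eq_mul]
    have h3 : (star x ⬝ᵥ x).re + γ * (star x ⬝ᵥ A *ᵥ x).re = 0 := by
      have := congrArg Complex.re (h2.symm.trans h1)
      simpa [Complex.add_re, Complex.mul_re] using this
    have h4 : 0 ≤ (star x ⬝ᵥ A *ᵥ x).re := hA x
    have hsum : (star x ⬝ᵥ x).re = ∑ i, Complex.normSq (x i) := by
      simp [dotProduct, Complex.re_sum, Complex.mul_re, Complex.normSq_apply]
    have hsnn : 0 ≤ (star x ⬝ᵥ x).re := by
      rw [hsum]; exact Finset.sum_nonneg fun i _ => Complex.normSq_nonneg _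
    have h5 : (star x ⬝ᵥ x).re = 0 := by nlinarith [mul_nonneg hγ.le h4]
    have h6 : ∀ i, x i = 0 := by
      rw [hsum] at h5
      intro i
      have : Complex.normSq (x i) = 0 := by
        have hnn : ∀ i ∈ Finset.univ, (0:ℝ) ≤ Complex.normSq (x i) :=
          fun i _ => Complex.normSq_nonneg _
        exact (Finset.sum_eq_zero_iff_of_nonneg hnn).mp h5 i (Finset.mem_univ i)
      exact Complex.normSq_eq_zero.mp this
    funext i; exact h6 i
  intro a b hab
  have : (1 + (γ:ℂ) • A) *ᵥ (a - b) = 0 := by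
    rw [Matrix.mulVec_sub, hab, sub_self]
  have := hker _ this
  exact sub_eq_zero.mp this

end Helpers

/-- **Proposition 1** (residual bound for the SAI Krylov subspace method). -/
theorem sai_residual_bound (n k : ℕ) (hk : 2 ≤ k)
    (A : Matrix (Fin n) (Fin n) ℂ)
    (hA : ∀ x : Fin n → ℂ, 0 ≤ (star x ⬝ᵥ A.mulVec x).re)
    (γ : ℝ) (hγ : 0 < γ)
    (Vk : Matrix (Fin n) (Fin k) ℂ) (vk1 : Matrix (Fin n) (Fin 1) ℂ)
    (horth : (Matrix.fromCols Vk vk1)ᴴ * Matrix.fromCols Vk vk1 = 1)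
    (Ht : Matrix (Fin k) (Fin k) ℂ) (hHt : IsUnit Ht) (ht : ℝ) (hht : 0 ≤ ht)
    (harn : (1 + (γ : ℂ) • A)⁻¹ * Vk = Vk * Ht +
      (ht : ℂ) • (vk1 * Matrix.single (0 : Fin 1) (⟨k - 1, by omega⟩ : Fin k) (1 : ℂ)))
    (H : Matrix (Fin k) (Fin k) ℂ) (hH : H = (γ : ℂ)⁻¹ • (Ht⁻¹ - 1))
    (ωk : ℝ) (hωk : 0 ≤ ωk)
    (hfov : ∀ x : Fin k → ℂ, ωk * (star x ⬝ᵥ x).re ≤ (star x ⬝ᵥ H.mulVec x).re)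
    (β : ℝ) (hβ : 0 < β)
    (u : ℝ → Matrix (Fin k) (Fin 1) ℂ)
    (hu : ∀ t : ℝ, u t = (β : ℂ) • (NormedSpace.exp ((-t : ℂ) • H) *
      Matrix.single (⟨0, by omega⟩ : Fin k) (0 : Fin 1) (1 : ℂ)))
    (y yd r : ℝ → Matrix (Fin n) (Fin 1) ℂ)
    (hy : ∀ t : ℝ, y t = Vk * u t)
    (hyd : ∀ t : ℝ, yd t = -(Vk * (H * u t)))
    (hr : ∀ t : ℝ, r t = -(A * y t) - yd t)
    (βk : ℝ → ℂ)
    (hβk : ∀ t : ℝ, βk t = (ht : ℂ) / (γ : ℂ) *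
      ((Matrix.single (0 : Fin 1) (⟨k - 1, by omega⟩ : Fin k) (1 : ℂ) *
        ((1 + (γ : ℂ) • H) * u t) : Matrix (Fin 1) (Fin 1) ℂ) 0 0)) :
    IsUnit (1 + (γ : ℂ) • A) ∧
    ∀ t : ℝ, 0 ≤ t →
      r t = βk t • ((1 + (γ : ℂ) • A) * vk1) ∧
      ‖r t‖ = ‖βk t‖ * ‖(1 + (γ : ℂ) • A) * vk1‖ ∧
      ‖βk t‖ ≤ β * ht *
        (γ⁻¹ * min (t * ‖(1 + (γ : ℂ) • H) * H‖ * phi (-t * ωk))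
            (‖(1 : Matrix (Fin k) (Fin k) ℂ) + (γ : ℂ) • H‖ * (1 + Real.exp (-t * ωk))) +
          ‖H (⟨k - 1, by omega⟩ : Fin k) (⟨0, by omega⟩ : Fin k)‖) := by
  classical
  have hγc : (γ : ℂ) ≠ 0 := Complex.ofReal_ne_zero.mpr hγ.ne'
  set S : Matrix (Fin n) (Fin n) ℂ := 1 + (γ : ℂ) • A with hSdef
  have hS : IsUnit S := isUnit_one_add_smul n A hA γ hγ
  -- notation
  set Ek : Matrix (Fin 1) (Fin k) ℂ :=
    Matrix.single (0 : Fin 1) (⟨k - 1, by omega⟩ : Fin k) (1 : ℂ) with hEk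
  set e1 : Matrix (Fin k) (Fin 1) ℂ :=
    Matrix.single (⟨0, by omega⟩ : Fin k) (0 : Fin 1) (1 : ℂ) with he1
  set B : Matrix (Fin k) (Fin k) ℂ := 1 + (γ : ℂ) • H with hB
  have hHtinv1 : Ht⁻¹ = B := by
    have h : (γ:ℂ) • H = Ht⁻¹ - 1 := by
      rw [hH, smul_smul, mul_inv_cancel₀ hγc, one_smul]
    rw [hB, h]; abel
  have hSS : S * S⁻¹ = 1 := Matrix.mul_nonsing_inv _ ((Matrix.isUnit_iff_isUnit_det _).mp hS)
  have hHtHt : Ht * Ht⁻¹ = 1 := Matrix.mul_nonsing_inv _ ((Matrix.isUnit_iff_isUnit_det _).mp hHt)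
  have e1eq : Vk = S * (Vk * Ht) + (ht:ℂ) • (S * (vk1 * Ek)) := by
    have h0 : S * (S⁻¹ * Vk) = Vk := by rw [← Matrix.mul_assoc, hSS, Matrix.one_mul]
    calc Vk = S * (S⁻¹ * Vk) := h0.symm
      _ = S * (Vk * Ht + (ht:ℂ) • (vk1 * Ek)) := by rw [harn]
      _ = S * (Vk * Ht) + (ht:ℂ) • (S * (vk1 * Ek)) := by
          rw [Matrix.mul_add, Matrix.mul_smul]
  have e2 : Vk * Ht⁻¹ = S * Vk + (ht:ℂ) • (S * (vk1 * (Ek * Ht⁻¹))) := by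
    conv_lhs => rw [e1eq]
    rw [Matrix.add_mul, Matrix.smul_mul]
    congr 1
    · rw [Matrix.mul_assoc, Matrix.mul_assoc, hHtHt, Matrix.mul_one]
    · congr 1
      rw [Matrix.mul_assoc, Matrix.mul_assoc]
  set X : Matrix (Fin n) (Fin k) ℂ := S * (vk1 * (Ek * B)) with hX
  have hAVk : A * Vk = Vk * H - ((γ:ℂ)⁻¹ * (ht:ℂ)) • X := by
    have h1 : S * Vk = Vk + (γ:ℂ) • (A * Vk) := by
      rw [hSdef, Matrix.add_mul, Matrix.one_mul, Matrix.smul_mul]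
    have h2 : Vk * Ht⁻¹ = Vk + (γ:ℂ) • (Vk * H) := by
      rw [hHtinv1, hB, Matrix.mul_add, Matrix.mul_one, Matrix.mul_smul]
    have h := e2
    rw [h2, h1, hHtinv1] at h
    rw [add_assoc] at h
    have h' : (γ:ℂ) • (Vk * H) = (γ:ℂ) • (A * Vk) + (ht:ℂ) • X := add_left_cancel h
    have h3 : (γ:ℂ) • (A * Vk) = (γ:ℂ) • (Vk * H) - (ht:ℂ) • X :=
      eq_sub_of_add_eq h'.symm
    calc A * Vk = (γ:ℂ)⁻¹ • ((γ:ℂ) • (A * Vk)) := by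
          rw [smul_smul, inv_mul_cancel₀ hγc, one_smul]
      _ = (γ:ℂ)⁻¹ • ((γ:ℂ) • (Vk * H) - (ht:ℂ) • X) := by rw [h3]
      _ = Vk * H - ((γ:ℂ)⁻¹ * (ht:ℂ)) • X := by
          rw [smul_sub, smul_smul, smul_smul, inv_mul_cancel₀ hγc, one_smul]
  -- the scalar
  refine ⟨hS, fun t htt => ?_⟩
  set c : ℂ := (Ek * (B * u t)) 0 0 with hc
  have hβkt : βk t = (ht : ℂ) / (γ : ℂ) * c := hβk t
  have hXu : X * u t = c • (S * vk1) := by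
    rw [hX, Matrix.mul_assoc S, Matrix.mul_assoc vk1, Matrix.mul_assoc Ek]
    have hM : Ek * (B * u t) = c • (1 : Matrix (Fin 1) (Fin 1) ℂ) := by
      ext i j
      fin_cases i; fin_cases j
      simp [hc]
    rw [hM, Matrix.mul_smul, Matrix.mul_one, Matrix.mul_smul]
  have ha : r t = βk t • (S * vk1) := by
    have h1 : r t = Vk * (H * u t) - A * (Vk * u t) := by
      rw [hr t, hy t, hyd t]; abel
    rw [h1, ← Matrix.mul_assoc A, hAVk, Matrix.sub_mul, Matrix.smul_mul, hXu,
      Matrix.mul_assoc Vk]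
    rw [smul_smul, hβkt]
    have : (γ:ℂ)⁻¹ * (ht:ℂ) * c = (ht:ℂ) / (γ:ℂ) * c := by ring
    rw [this]
    abel
  refine ⟨ha, ?_, ?_⟩
  · rw [ha, norm_smul]
  -- the bound
  have hent : ∀ N : Matrix (Fin k) (Fin 1) ℂ,
      (Ek * N) 0 0 = N ⟨k - 1, by omega⟩ 0 := by
    intro N
    simp [hEk, Matrix.mul_apply, Matrix.single, ite_and]
  have hent2 : ∀ M : Matrix (Fin k) (Fin k) ℂ,
      (M * e1) ⟨k - 1, by omega⟩ 0 = M ⟨k - 1, by omega⟩ ⟨0, by omega⟩ := by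
    intro M
    simp [he1, Matrix.mul_apply, Matrix.single, ite_and]
  set E : Matrix (Fin k) (Fin k) ℂ := NormedSpace.exp ((-t : ℂ) • H) with hE
  set F : ℂ := (B * E) ⟨k - 1, by omega⟩ ⟨0, by omega⟩ with hF
  have hcF : c = (β : ℂ) * F := by
    rw [hc, hent, hu t, Matrix.mul_smul, ← Matrix.mul_assoc, Matrix.smul_apply,
      hent2, smul_eq_mul]
  have hBidx : B ⟨k - 1, by omega⟩ ⟨0, by omega⟩
      = (γ:ℂ) * H ⟨k - 1, by omega⟩ ⟨0, by omega⟩ := by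
    have hne : (⟨k-1, by omega⟩ : Fin k) ≠ (⟨0, by omega⟩ : Fin k) := by
      simp [Fin.ext_iff]; omega
    simp [hB, Matrix.add_apply, Matrix.one_apply_ne hne]
  set m : ℝ := min (t * ‖B * H‖ * phi (-t * ωk)) (‖B‖ * (1 + Real.exp (-t * ωk))) with hm
  have hGbound : ‖(B * E - B) ⟨k - 1, by omega⟩ ⟨0, by omega⟩‖ ≤ m := by
    refine le_min ?_ ?_
    · calc ‖(B * E - B) ⟨k - 1, by omega⟩ ⟨0, by omega⟩‖ ≤ ‖B * E - B‖ :=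
            entry_abs_le_l2_opNorm _ _ _
        _ ≤ ‖B * H‖ * (t * phi (-t * ωk)) := key_bound B H ωk hωk hfov t htt
        _ = t * ‖B * H‖ * phi (-t * ωk) := by ring
    · calc ‖(B * E - B) ⟨k - 1, by omega⟩ ⟨0, by omega⟩‖ ≤ ‖B * E - B‖ :=
            entry_abs_le_l2_opNorm _ _ _
        _ = ‖B * (E - 1)‖ := by rw [Matrix.mul_sub, Matrix.mul_one]
        _ ≤ ‖B‖ * ‖E - 1‖ := Matrix.l2_opNorm_mul _ _
        _ ≤ ‖B‖ * (1 + Real.exp (-t * ωk)) := by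
            apply mul_le_mul_of_nonneg_left _ (norm_nonneg _)
            calc ‖E - 1‖ ≤ ‖E‖ + ‖(1 : Matrix (Fin k) (Fin k) ℂ)‖ := norm_sub_le _ _
              _ ≤ Real.exp (-t * ωk) + 1 := by
                  have := exp_opNorm_le H ωk hfov t htt
                  have h1 := norm_one_le' k
                  rw [hE]
                  exact add_le_add this h1
              _ = 1 + Real.exp (-t * ωk) := by ring
  have hFbound : ‖F‖ ≤ m + γ * ‖H ⟨k - 1, by omega⟩ ⟨0, by omega⟩‖ := by
    have hdecomp : F = (B * E - B) ⟨k - 1, by omega⟩ ⟨0, by omega⟩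
        + (γ:ℂ) * H ⟨k - 1, by omega⟩ ⟨0, by omega⟩ := by
      rw [hF, ← hBidx]
      simp [Matrix.sub_apply]
    rw [hdecomp]
    calc ‖_‖ ≤ ‖(B * E - B) ⟨k - 1, by omega⟩ ⟨0, by omega⟩‖
          + ‖(γ:ℂ) * H ⟨k - 1, by omega⟩ ⟨0, by omega⟩‖ := norm_add_le _ _
      _ ≤ m + γ * ‖H ⟨k - 1, by omega⟩ ⟨0, by omega⟩‖ := by
          rw [norm_mul, Complex.norm_of_nonneg hγ.le]
          exact add_le_add_left hGbound _
  have habs : ‖βk t‖ = ht / γ * (β * ‖F‖) := by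
    rw [hβkt, hcF, norm_mul, norm_mul, norm_div, Complex.norm_of_nonneg hht,
      Complex.norm_of_nonneg hγ.le, Complex.norm_of_nonneg hβ.le]
  rw [habs]
  have hfinal : ht / γ * (β * ‖F‖)
      ≤ ht / γ * (β * (m + γ * ‖H ⟨k - 1, by omega⟩ ⟨0, by omega⟩‖)) := by
    apply mul_le_mul_of_nonneg_left _ (by positivity)
    exact mul_le_mul_of_nonneg_left hFbound hβ.le
  refine hfinal.trans (le_of_eq ?_)
  rw [hm]
  field_simp
end

section
/- Let λ ∈ ℂ with Re λ ≥ 0, and let γ, γ̃ be real numbers with 0 < γ̃ ≤ γ. Then 1 + γλ ≠ 0 and |1 − (1 + γ̃λ)/(1 + γλ)| ≤ 1 − γ̃/γ; moreover |1 − (1 + γ̃λ)/(1 + γλ)| < 1. -/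
/-- Scalar eigenvalue estimate from the proof of Proposition 2: for `Re λ ≥ 0` and
`0 < γ̃ ≤ γ`, one has `1 + γλ ≠ 0`, `|1 - (1 + γ̃λ)/(1 + γλ)| ≤ 1 - γ̃/γ`, and
`|1 - (1 + γ̃λ)/(1 + γλ)| < 1`. -/
theorem richardson_scalar_eigenvalue_bound (l : ℂ) (hl : 0 ≤ l.re)
    (γ γt : ℝ) (hγt : 0 < γt) (hγ : γt ≤ γ) :
    1 + (γ : ℂ) * l ≠ 0 ∧
    ‖1 - (1 + (γt : ℂ) * l) / (1 + (γ : ℂ) * l)‖ ≤ 1 - γt / γ ∧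
    ‖1 - (1 + (γt : ℂ) * l) / (1 + (γ : ℂ) * l)‖ < 1 := by
  have hγ0 : (0:ℝ) < γ := lt_of_lt_of_le hγt hγ
  have hz : 1 + (γ : ℂ) * l ≠ 0 := by
    intro h
    have := congrArg Complex.re h
    simp [Complex.add_re, Complex.mul_re] at this
    nlinarith
  have hrw : 1 - (1 + (γt : ℂ) * l) / (1 + (γ : ℂ) * l)
      = ((γ : ℂ) - γt) * l / (1 + (γ : ℂ) * l) := by
    rw [eq_div_iff hz, sub_mul, div_mul_cancel₀ _ hz]
    ring
  have habs : ‖(γ:ℂ) * l‖ ≤ ‖1 + (γ:ℂ) * l‖ := by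
    have h1 : ‖(γ:ℂ) * l‖ ^ 2 ≤ ‖1 + (γ:ℂ) * l‖ ^ 2 := by
      rw [Complex.sq_norm, Complex.sq_norm, Complex.normSq_apply, Complex.normSq_apply]
      simp [Complex.add_re, Complex.add_im, Complex.mul_re, Complex.mul_im]
      nlinarith
    nlinarith [norm_nonneg ((γ:ℂ)*l), norm_nonneg (1 + (γ:ℂ)*l)]
  have hle : ‖1 - (1 + (γt : ℂ) * l) / (1 + (γ : ℂ) * l)‖ ≤ 1 - γt / γ := by
    rw [hrw, norm_div, div_le_iff₀ (norm_pos_iff.mpr hz)]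
    have e1 : ‖((γ : ℂ) - γt) * l‖ = (γ - γt) * ‖l‖ := by
      rw [norm_mul]
      congr 1
      rw [← Complex.ofReal_sub, Complex.norm_of_nonneg (by linarith)]
    have e2 : ‖(γ:ℂ) * l‖ = γ * ‖l‖ := by
      rw [norm_mul, Complex.norm_of_nonneg hγ0.le]
    have h2 : γ * ‖l‖ ≤ ‖1 + (γ:ℂ)*l‖ := e2 ▸ habs
    rw [e1]
    have h3 : (1 - γt/γ) * (γ * ‖l‖) ≤ (1 - γt/γ) * ‖1 + (γ:ℂ)*l‖ := by
      apply mul_le_mul_of_nonneg_left h2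
      have : γt / γ ≤ 1 := (div_le_one hγ0).mpr hγ
      linarith
    have e3 : (1 - γt/γ) * (γ * ‖l‖) = (γ - γt) * ‖l‖ := by
      field_simp
    linarith [e3 ▸ h3]
  refine ⟨hz, hle, lt_of_le_of_lt hle ?_⟩
  have : 0 < γt / γ := div_pos hγt hγ0
  linarith
end
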